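/- arXiv:1902.03391 — 2 statements merged into one kernel-verified Lean document; each statement's English description precedes it below -/
import Mathlib

section
/- Let l ≥ 3 and n = 2^l − 1. Then dil(S_n, HT(l)) = l − 1: every bijection from the vertices of the star S_n to the vertices of the hypertree HT(l) has some edge of S_n whose endpoint images are at distance at least l − 1 in HT(l), and there exists a bijection under which every edge of S_n maps to a pair of vertices at distance at most l − 1 in HT(l). -/
/-!
Deleting the root of `HT(l)` leaves the Cartesian product of `K₂` with the complete binary tree
`T` of height `l - 2`: the second binary digit of a label is the `K₂`-coordinate, and deleting it
gives the position in `T`. Every vertex is within distance `l - 1` of the root, so sending the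
centre of the star to the root achieves dilation `l - 1`.

Conversely, let `c` be the image of the centre. Choose the half of `HT(l)` not containing `c` and,
in `T`, the subtree of the root not containing the position of `c`. The potential
"(0 on the chosen half, 1 elsewhere) + (depth in `T`, negated on the chosen subtree)" changes by at
most one along every edge, is at least `1` at `c`, and equals `-(l - 2)` at a deepest vertex `y` of
the chosen half and subtree; hence `dist c y ≥ l - 1`.
-/

open SimpleGraph

/-- Star graph `K_{1,n-1}` on `Fin n`, centre `0`. -/
def starGraph (n : ℕ) : SimpleGraph (Fin n) where
  Adj x y := x ≠ y ∧ (x.val = 0 ∨ y.val = 0)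
  symm := ⟨by rintro x y ⟨h1, h2⟩; exact ⟨h1.symm, by tauto⟩⟩
  loopless := ⟨by rintro x ⟨h1, -⟩; exact h1 rfl⟩

/-- Adjacency of hypertree labels (1-based): binary tree edges plus horizontal
edges between labels on the same level `i ≥ 2` differing by `2^(i-2)`.
The level of label `a` is `Nat.log 2 a + 1`. -/
def htAdjLbl (a b : ℕ) : Prop :=
  (b = 2 * a ∨ b = 2 * a + 1 ∨ a = 2 * b ∨ a = 2 * b + 1) ∨
  (a ≠ b ∧ Nat.log 2 a = Nat.log 2 b ∧ 1 ≤ Nat.log 2 a ∧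
    max a b - min a b = 2 ^ (Nat.log 2 a - 1))

/-- The hypertree `HT(l)` on `Fin (2^l - 1)`; vertex `x` has label `x+1`. -/
def hypertree (l : ℕ) : SimpleGraph (Fin (2 ^ l - 1)) where
  Adj x y := htAdjLbl (x.val + 1) (y.val + 1)
  symm := ⟨by
    rintro x y (h | ⟨hne, hlog, hge, hdiff⟩)
    · left; tauto
    · right
      refine ⟨hne.symm, hlog.symm, ?_, ?_⟩
      · rw [← hlog]; exact hge
      · rw [max_comm, min_comm, ← hlog]; exact hdiff⟩
  loopless := ⟨by
    rintro x (h | ⟨hne, -⟩)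
    · omega
    · exact hne rfl⟩

theorem SimpleGraph.Reachable.sub_le_dist {V : Type*} {G : SimpleGraph V} {f : V → ℤ}
    (hf : ∀ u v, G.Adj u v → f u ≤ f v + 1) {u v : V} (h : G.Reachable u v) :
    f u - f v ≤ G.dist u v := by
  obtain ⟨w, hw⟩ := h.exists_walk_length_eq_dist
  rw [← hw]
  clear hw h
  induction w with
  | nil => simp
  | cons hadj w ih =>
    have := hf _ _ hadj
    rw [Walk.length_cons]
    push_cast
    linarith

lemma Nat.log_two_two_mul_add {a e : ℕ} (ha : 1 ≤ a) (he : e ≤ 1) :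
    Nat.log 2 (2 * a + e) = Nat.log 2 a + 1 := by
  rw [Nat.log_of_one_lt_of_le one_lt_two (by omega)]
  congr 2
  omega

namespace Hypertree

def leadingBits (j a : ℕ) : ℕ := a / 2 ^ (Nat.log 2 a + 1 - j)

lemma leadingBits_two_mul_add {j a e : ℕ} (ha : 1 ≤ a) (he : e ≤ 1)
    (hj : j ≤ Nat.log 2 a + 1) : leadingBits j (2 * a + e) = leadingBits j a := by
  rw [leadingBits, leadingBits, Nat.log_two_two_mul_add ha he,
    show Nat.log 2 a + 1 + 1 - j = Nat.log 2 a + 1 - j + 1 by omega, pow_succ',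
    ← Nat.div_div_eq_div_mul]
  congr 1
  omega

lemma leadingBits_three_add_two_pow {a d : ℕ} (hd : 2 ≤ d) (ha : Nat.log 2 a = d)
    (hb : Nat.log 2 (a + 2 ^ (d - 1)) = d) :
    leadingBits 3 (a + 2 ^ (d - 1)) = leadingBits 3 a + 2 := by
  rw [leadingBits, leadingBits, ha, hb, show d + 1 - 3 = d - 2 by omega,
    show d - 1 = d - 2 + 1 by omega, pow_succ, mul_comm, Nat.add_mul_div_right _ _ (by positivity)]

/-- `τ` selects a half of `HT(l)` and `β` a subtree of `T` by a binary digit; `Nat.log 2 a - 1` is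
the depth in `T`, truncated to `0` at the root. -/
def potential (τ β a : ℕ) : ℤ :=
  (if 1 ≤ Nat.log 2 a ∧ leadingBits 2 a % 2 = τ then 0 else 1) +
    if 2 ≤ Nat.log 2 a ∧ leadingBits 3 a % 2 = β then -((Nat.log 2 a - 1 : ℕ) : ℤ)
    else ((Nat.log 2 a - 1 : ℕ) : ℤ)

lemma abs_potential_two_mul_add_sub_le (τ β : ℕ) {a e : ℕ} (ha : 1 ≤ a) (he : e ≤ 1) :
    |potential τ β (2 * a + e) - potential τ β a| ≤ 1 := by
  unfold potential
  rw [Nat.log_two_two_mul_add ha he, abs_le]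
  obtain hlog | hlog | hlog : Nat.log 2 a = 0 ∨ Nat.log 2 a = 1 ∨ 2 ≤ Nat.log 2 a := by omega
  · constructor <;> split_ifs <;> omega
  · rw [leadingBits_two_mul_add ha he (by omega : 2 ≤ Nat.log 2 a + 1)]
    constructor <;> split_ifs <;> omega
  · rw [leadingBits_two_mul_add ha he (by omega : 2 ≤ Nat.log 2 a + 1),
      leadingBits_two_mul_add ha he (by omega : 3 ≤ Nat.log 2 a + 1)]
    constructor <;> split_ifs <;> omega

lemma abs_potential_add_sub_le (τ β : ℕ) {a d : ℕ} (hd : 1 ≤ d) (ha : Nat.log 2 a = d)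
    (hb : Nat.log 2 (a + 2 ^ (d - 1)) = d) :
    |potential τ β (a + 2 ^ (d - 1)) - potential τ β a| ≤ 1 := by
  unfold potential
  rw [ha, hb, abs_le]
  obtain rfl | hd : d = 1 ∨ 2 ≤ d := by omega
  · constructor <;> split_ifs <;> omega
  · rw [leadingBits_three_add_two_pow hd ha hb]
    constructor <;> split_ifs <;> omega

lemma potential_le_of_htAdjLbl (τ β : ℕ) {a b : ℕ} (ha : 1 ≤ a) (hb : 1 ≤ b)
    (h : htAdjLbl a b) : potential τ β a ≤ potential τ β b + 1 := by
  rcases h with (rfl | rfl | rfl | rfl) | ⟨hne, hlog, hd, hdiff⟩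
  · have := abs_le.mp (abs_potential_two_mul_add_sub_le τ β ha zero_le_one)
    rw [add_zero] at this
    linarith
  · linarith [abs_le.mp (abs_potential_two_mul_add_sub_le τ β ha le_rfl)]
  · have := abs_le.mp (abs_potential_two_mul_add_sub_le τ β hb zero_le_one)
    rw [add_zero] at this
    linarith
  · linarith [abs_le.mp (abs_potential_two_mul_add_sub_le τ β hb le_rfl)]
  · rcases lt_or_gt_of_ne hne with hab | hba
    · obtain rfl : b = a + 2 ^ (Nat.log 2 a - 1) := by omega
      linarith [abs_le.mp (abs_potential_add_sub_le τ β hd rfl hlog.symm)]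
    · obtain rfl : a = b + 2 ^ (Nat.log 2 b - 1) := by rw [← hlog]; omega
      linarith [abs_le.mp (abs_potential_add_sub_le τ β (hlog ▸ hd) rfl hlog)]

lemma one_le_potential {τ β a : ℕ} (hτ : leadingBits 2 a % 2 ≠ τ)
    (hβ : leadingBits 3 a % 2 ≠ β) : 1 ≤ potential τ β a := by
  unfold potential
  split_ifs <;> omega

lemma potential_deepest {l τ β : ℕ} (hl : 3 ≤ l) (hτ : τ ≤ 1) (hβ : β ≤ 1) :
    potential τ β ((4 + 2 * τ + β) * 2 ^ (l - 3)) = -((l - 2 : ℕ) : ℤ) := by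
  obtain ⟨k, rfl⟩ : ∃ k, l = k + 3 := ⟨l - 3, by omega⟩
  rw [show k + 3 - 3 = k by omega]
  have hpos : 0 < 2 ^ k := by positivity
  have hlog : Nat.log 2 ((4 + 2 * τ + β) * 2 ^ k) = k + 2 := by
    apply Nat.log_eq_of_pow_le_of_lt_pow
    · rw [pow_add]; nlinarith
    · rw [pow_add, pow_add]; nlinarith
  have h2 : leadingBits 2 ((4 + 2 * τ + β) * 2 ^ k) = 2 + τ := by
    rw [leadingBits, hlog, show k + 2 + 1 - 2 = k + 1 by omega, pow_succ', mul_comm 2,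
      Nat.mul_div_mul_right _ _ hpos]
    omega
  have h3 : leadingBits 3 ((4 + 2 * τ + β) * 2 ^ k) = 4 + 2 * τ + β := by
    rw [leadingBits, hlog, show k + 2 + 1 - 3 = k by omega, Nat.mul_div_cancel _ hpos]
  unfold potential
  rw [hlog, h2, h3]
  split_ifs <;> omega

end Hypertree

open Hypertree

lemma hypertree_exists_walk_from_root {l : ℕ} (h0 : 0 < 2 ^ l - 1) (v : Fin (2 ^ l - 1)) :
    ∃ w : (hypertree l).Walk ⟨0, h0⟩ v, w.length = Nat.log 2 (v + 1) := by
  obtain ⟨v, hv⟩ := v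
  induction v using Nat.strong_induction_on with
  | _ v ih =>
  rcases Nat.eq_zero_or_pos v with rfl | hpos
  · exact ⟨Walk.nil, by simp⟩
  have hparent : (v + 1) / 2 - 1 < 2 ^ l - 1 := by omega
  have hadj : (hypertree l).Adj ⟨(v + 1) / 2 - 1, hparent⟩ ⟨v, hv⟩ := by
    show htAdjLbl ((v + 1) / 2 - 1 + 1) (v + 1)
    left
    omega
  obtain ⟨w, hw⟩ := ih ((v + 1) / 2 - 1) (by omega) hparent
  refine ⟨w.concat hadj, ?_⟩
  rw [Walk.length_concat, hw]
  dsimp only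
  rw [Nat.log_of_one_lt_of_le one_lt_two (by omega : 2 ≤ v + 1)]
  congr 2
  omega

lemma hypertree_reachable {l : ℕ} (u v : Fin (2 ^ l - 1)) : (hypertree l).Reachable u v := by
  obtain ⟨wu, -⟩ := hypertree_exists_walk_from_root u.pos u
  obtain ⟨wv, -⟩ := hypertree_exists_walk_from_root u.pos v
  exact ⟨wu.reverse.append wv⟩

lemma hypertree_dist_root_le {l : ℕ} (v : Fin (2 ^ l - 1)) :
    (hypertree l).dist ⟨0, v.pos⟩ v ≤ l - 1 := by
  obtain ⟨w, hw⟩ := hypertree_exists_walk_from_root v.pos v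
  have : Nat.log 2 (v + 1) < l := Nat.log_lt_of_lt_pow (by omega) (by omega)
  exact (dist_le w).trans (by omega)

lemma hypertree_exists_le_dist {l : ℕ} (hl : 3 ≤ l) (c : Fin (2 ^ l - 1)) :
    ∃ y, l - 1 ≤ (hypertree l).dist c y := by
  set τ := 1 - leadingBits 2 (c + 1) % 2
  set β := 1 - leadingBits 3 (c + 1) % 2
  set y := (4 + 2 * τ + β) * 2 ^ (l - 3)
  have hP : 0 < 2 ^ (l - 3) := by positivity
  have hy_pos : 1 ≤ y := Nat.mul_pos (by omega) hP
  have hy_lt : y - 1 < 2 ^ l - 1 := by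
    have : 2 ^ l = 2 ^ (l - 3) * 2 ^ 3 := by rw [← pow_add]; congr 1; omega
    have : y ≤ 7 * 2 ^ (l - 3) := Nat.mul_le_mul_right _ (by omega)
    omega
  refine ⟨⟨y - 1, hy_lt⟩, ?_⟩
  have hlip := (hypertree_reachable c ⟨y - 1, hy_lt⟩).sub_le_dist
    (f := fun x : Fin (2 ^ l - 1) ↦ potential τ β (x + 1))
    fun x y hxy ↦ potential_le_of_htAdjLbl τ β (by omega) (by omega) hxy
  have hc : 1 ≤ potential τ β (c + 1) := one_le_potential (by omega) (by omega)
  have hy : potential τ β (y - 1 + 1) = -((l - 2 : ℕ) : ℤ) := by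
    rw [Nat.sub_add_cancel hy_pos]
    exact potential_deepest hl (by omega) (by omega)
  simp only at hlip
  omega

theorem dil_star_hypertree (l n : ℕ) (hl : 3 ≤ l) (hn : n = 2 ^ l - 1) :
    (∀ f : Fin n ≃ Fin (2 ^ l - 1), ∃ u v : Fin n, (_root_.starGraph n).Adj u v ∧
      l - 1 ≤ (hypertree l).dist (f u) (f v)) ∧
    (∃ f : Fin n ≃ Fin (2 ^ l - 1), ∀ u v : Fin n, (_root_.starGraph n).Adj u v →
      (hypertree l).dist (f u) (f v) ≤ l - 1) := by
  subst hn
  constructor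
  · intro f
    have h0 : 0 < 2 ^ l - 1 := Nat.sub_pos_of_lt (Nat.one_lt_two_pow (by omega))
    obtain ⟨y, hy⟩ := hypertree_exists_le_dist hl (f ⟨0, h0⟩)
    refine ⟨⟨0, h0⟩, f.symm y, ⟨fun h ↦ ?_, Or.inl rfl⟩, by rwa [f.apply_symm_apply]⟩
    rw [h, f.apply_symm_apply, dist_self] at hy
    omega
  · refine ⟨Equiv.refl _, ?_⟩
    rintro u v ⟨-, hu | hv⟩
    · obtain rfl : u = ⟨0, v.pos⟩ := Fin.ext hu
      exact hypertree_dist_root_le v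
    · obtain rfl : v = ⟨0, u.pos⟩ := Fin.ext hv
      rw [dist_comm]
      exact hypertree_dist_root_le u
end

section
/- Let n ≥ 4. Then EC(WM_{2^{n−1}}, G(2^n; ±{1, 2^{n−2}})) = 2^{n−2}: there exists an embedding with routing of the windmill graph WM_{2^{n−1}} (on 2^n vertices) into the circulant graph G(2^n; ±{1, 2^{n−2}}) whose maximum edge congestion is exactly 2^{n−2}, and every embedding with routing has some edge of congestion at least 2^{n−2}. -/
open SimpleGraph

/-- Windmill graph `WM_k` on `Fin (2k)`: the friendship graph `T_k` with one
degree-two vertex deleted; hub `0`, triangles `(0,1,2), …, (0,2k-3,2k-2)` and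
pendant vertex `2k-1`. -/
def windmillGraph (k : ℕ) : SimpleGraph (Fin (2 * k)) where
  Adj x y := x ≠ y ∧ (x.val = 0 ∨ y.val = 0 ∨
    (y.val = x.val + 1 ∧ x.val % 2 = 1) ∨ (x.val = y.val + 1 ∧ y.val % 2 = 1))
  symm := by constructor; rintro x y ⟨h1, h2⟩; exact ⟨h1.symm, by tauto⟩
  loopless := by constructor; rintro x ⟨h1, -⟩; exact h1 rfl

/-- The circulant graph `G(m; ±S)` on `ZMod m`: `i` and `j` are adjacent iff
`(i - j) mod m ∈ S` or `(j - i) mod m ∈ S`. -/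
def circulantG (m : ℕ) (S : Set ℕ) : SimpleGraph (ZMod m) where
  Adj i j := i ≠ j ∧ ((i - j).val ∈ S ∨ (j - i).val ∈ S)
  symm := by constructor; rintro i j ⟨h1, h2⟩; exact ⟨h1.symm, h2.symm⟩
  loopless := by constructor; rintro i ⟨h1, -⟩; exact h1 rfl

/-- An embedding with routing: a bijection on vertices together with, for each edge
of the guest graph, a path in the host graph between the images of its endpoints
(routing an edge in either direction uses the same path, reversed). -/
structure RoutedEmbedding {V W : Type*} (G : SimpleGraph V) (H : SimpleGraph W) where
  toEquiv : V ≃ W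
  route : ∀ u v, G.Adj u v → H.Walk (toEquiv u) (toEquiv v)
  route_isPath : ∀ u v (h : G.Adj u v), (route u v h).IsPath
  route_symm : ∀ u v (h : G.Adj u v), route v u h.symm = (route u v h).reverse

/-- The congestion of an edge `e` of the host graph: the number of guest edges whose
routing path passes through `e`. -/
noncomputable def congestion {V W : Type*} (G : SimpleGraph V) (H : SimpleGraph W)
    (R : RoutedEmbedding G H) (e : Sym2 W) : ℕ :=
  {d : Sym2 V | d ∈ G.edgeSet ∧
    ∃ u v, ∃ h : G.Adj u v, d = s(u, v) ∧ e ∈ (R.route u v h).edges}.ncard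


/-!
Write `c = 2 ^ (n - 2)`, so that the guest is `WM_{2c}` on `4c` vertices and the host is
`C_{4c}(1, c)`. The hub of the windmill is adjacent to all `4c - 1` other vertices, while every
vertex of the host has degree at most `4`: the `4c - 1` routes leaving the image of the hub share
at most four edges, so one of them carries at least `c` routes.

Conversely, embed the windmill identically with its hub at `0`. The hub is routed to `j` along
the cycle when `j ≤ c` or `j ≥ 3c`, and otherwise through the chord to `c` (for `c < j ≤ 2c`)
or to `3c` (for `2c < j < 3c`) followed by a cycle arc; each blade `{2i - 1, 2i}` is routed along
its own cycle edge. The hub routes through a cycle edge `{x, x + 1}` end in an interval of at most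
`c` targets, and of at most `c - 1` targets when that edge is a blade; each of the two chords at
`0` carries at most `c` hub routes, and the other chords carry none.
-/

open Finset

namespace RoutedEmbedding

variable {V W : Type*} {G : SimpleGraph V} {H : SimpleGraph W}

theorem degree_le_mul_of_congestion_le [Fintype V] [DecidableEq W] (R : RoutedEmbedding G H)
    (v : V) [Fintype (G.neighborSet v)] [Fintype (H.neighborSet (R.toEquiv v))] {k : ℕ}
    (hk : ∀ w, H.Adj (R.toEquiv v) w → congestion G H R s(R.toEquiv v, w) ≤ k) :
    G.degree v ≤ H.degree (R.toEquiv v) * k := by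
  classical
  let firstStep (u : V) : W := if h : G.Adj v u then (R.route v u h).snd else R.toEquiv v
  have not_nil {u} (h : G.Adj v u) : ¬ (R.route v u h).Nil :=
    Walk.not_nil_of_ne (R.toEquiv.injective.ne h.ne)
  rw [← card_neighborFinset_eq_degree, ← card_neighborFinset_eq_degree, mul_comm]
  refine card_le_mul_card_image_of_maps_to (f := firstStep) (fun u hu => ?_) k fun w hw => ?_
  · rw [mem_neighborFinset] at hu ⊢
    simpa [firstStep, hu] using Walk.adj_snd (not_nil hu)
  · refine le_trans ?_ (hk w ((mem_neighborFinset _ _ _).1 hw))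
    rw [← Set.ncard_coe_finset]
    refine Set.ncard_le_ncard_of_injOn (fun u => s(v, u)) (fun u hu => ?_)
      (fun u _ u' _ h => Sym2.congr_right.1 h) (Set.toFinite _)
    simp only [coe_filter, mem_neighborFinset, Set.mem_ofPred_eq] at hu
    obtain ⟨hu, rfl⟩ := hu
    refine ⟨hu, v, u, hu, rfl, ?_⟩
    simpa [firstStep, hu] using Walk.mk_start_snd_mem_edges (not_nil hu)

def ofLT [LinearOrder V] (f : V ≃ W) (r : ∀ u v, u < v → G.Adj u v → H.Walk (f u) (f v))
    (hr : ∀ u v huv h, (r u v huv h).IsPath) : RoutedEmbedding G H where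
  toEquiv := f
  route u v h :=
    if huv : u < v then r u v huv h
    else (r v u (lt_of_le_of_ne (not_lt.1 huv) h.ne.symm) h.symm).reverse
  route_isPath u v h := by
    split_ifs
    · exact hr ..
    · exact (hr ..).reverse
  route_symm u v h := by
    rcases lt_or_gt_of_ne h.ne with huv | hvu
    · simp [huv, not_lt_of_gt huv]
    · simp [hvu, not_lt_of_gt hvu]

theorem congestion_ofLT_le [LinearOrder V] {f : V ≃ W}
    {r : ∀ u v, u < v → G.Adj u v → H.Walk (f u) (f v)}
    {hr : ∀ u v huv h, (r u v huv h).IsPath} {e : Sym2 W} (F : Finset (Sym2 V))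
    (hF : ∀ u v huv h, e ∈ (r u v huv h).edges → s(u, v) ∈ F) :
    congestion G H (ofLT f r hr) e ≤ F.card := by
  rw [← Set.ncard_coe_finset]
  refine Set.ncard_le_ncard ?_ (Set.toFinite _)
  rintro _ ⟨-, u, v, h, rfl, he⟩
  simp only [ofLT] at he
  split_ifs at he with huv
  · exact hF u v huv h he
  · rw [Sym2.eq_swap]
    exact hF v u _ h.symm (by simpa using he)

end RoutedEmbedding

theorem ZMod.natCast_injOn_Iio {m : ℕ} : Set.InjOn (Nat.cast : ℕ → ZMod m) (Set.Iio m) :=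
  fun a ha b hb h => by
    simpa [ZMod.val_cast_of_lt ha, ZMod.val_cast_of_lt hb] using congrArg ZMod.val h

theorem ZMod.natCast_ne_zero_of_pos_of_lt {m k : ℕ} (h0 : 0 < k) (hk : k < m) :
    (k : ZMod m) ≠ 0 := by
  simpa [ZMod.natCast_eq_zero_iff] using Nat.not_dvd_of_pos_of_lt h0 hk

def finEquivZMod (m : ℕ) [NeZero m] : Fin m ≃ ZMod m where
  toFun v := v.val
  invFun x := ⟨x.val, x.val_lt⟩
  left_inv v := Fin.ext (ZMod.val_cast_of_lt v.isLt)
  right_inv := ZMod.natCast_zmod_val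

section Circulant

variable {m : ℕ} {S : Set ℕ}

theorem circulantG_adj_natCast_add {s : ℕ} (hs : s ∈ S) (h0 : 0 < s) (hsm : s < m) (a : ℕ) :
    (circulantG m S).Adj a ↑(a + s) := by
  have hsub : ((a + s : ℕ) : ZMod m) - a = s := by push_cast; ring
  refine ⟨fun h => ZMod.natCast_ne_zero_of_pos_of_lt h0 hsm ?_, Or.inr ?_⟩
  · rw [← hsub, ← h, sub_self]
  · rwa [hsub, ZMod.val_cast_of_lt hsm]

theorem circulantG_exists_eq_of_mem_edgeSet [NeZero m] {e : Sym2 (ZMod m)}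
    (he : e ∈ (circulantG m S).edgeSet) :
    ∃ x < m, ∃ d ∈ S, e = s((x : ZMod m), ↑(x + d)) := by
  induction e using Sym2.ind with | _ p q => ?_
  have key (y z : ZMod m) : s((y.val : ZMod m), ↑(y.val + (z - y).val)) = s(y, z) := by simp
  obtain ⟨-, h | h⟩ := he
  · exact ⟨q.val, q.val_lt, _, h, by rw [key, Sym2.eq_swap]⟩
  · exact ⟨p.val, p.val_lt, _, h, by rw [key]⟩

theorem circulantG_degree_le_four [NeZero m] {a b : ℕ} (x : ZMod m)
    [Fintype ((circulantG m {a, b}).neighborSet x)] : (circulantG m {a, b}).degree x ≤ 4 := by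
  have hval (z : ZMod m) (h : z.val ∈ ({a, b} : Set ℕ)) : z = a ∨ z = b := by
    rcases h with h | h <;> [left; right] <;> rw [← ZMod.natCast_zmod_val z, h]
  rw [← card_neighborFinset_eq_degree]
  refine (card_le_card fun y hy => ?_).trans
    (card_le_four (a := x + a) (b := x - a) (c := x + b) (d := x - b))
  obtain ⟨-, h | h⟩ := (mem_neighborFinset _ _ _).1 hy <;> rcases hval _ h with h | h <;>
    simp only [mem_insert, mem_singleton] <;> grind

theorem natCast_sym2_add_inj {x y d : ℕ} (hx : x < m) (hy : y < m) (hd : 0 < d)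
    (hdm : 2 * d < m) (h : s((x : ZMod m), ↑(x + d)) = s((y : ZMod m), ↑(y + d))) : x = y := by
  rcases Sym2.eq_iff.1 h with ⟨h, -⟩ | ⟨h₁, h₂⟩
  · exact ZMod.natCast_injOn_Iio hx hy h
  · refine absurd ?_ (ZMod.natCast_ne_zero_of_pos_of_lt (by omega) hdm)
    push_cast at h₁ h₂ ⊢
    linear_combination h₂ - h₁

theorem natCast_sym2_add_one_ne {x y d : ℕ} (hd : 1 < d) (hdm : d + 1 < m) :
    s((x : ZMod m), ↑(x + 1)) ≠ s((y : ZMod m), ↑(y + d)) := by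
  intro h
  rcases Sym2.eq_iff.1 h with ⟨h₁, h₂⟩ | ⟨h₁, h₂⟩
  · refine absurd ?_ (ZMod.natCast_ne_zero_of_pos_of_lt (by omega : 0 < d - 1)
      (by omega : d - 1 < m))
    push_cast [Nat.cast_sub hd.le] at h₁ h₂ ⊢
    linear_combination h₁ - h₂
  · refine absurd ?_ (ZMod.natCast_ne_zero_of_pos_of_lt (by omega : 0 < d + 1) hdm)
    push_cast at h₁ h₂ ⊢
    linear_combination h₂ - h₁

variable (h1 : 1 ∈ S) (hm : 1 < m)

def circulantArc (a : ℕ) : (L : ℕ) → (circulantG m S).Walk a ↑(a + L)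
  | 0 => .nil
  | L + 1 => (circulantArc a L).concat (circulantG_adj_natCast_add h1 one_pos hm (a + L))

theorem circulantArc_edges (a L : ℕ) : (circulantArc h1 hm a L).edges =
    (List.range L).map fun i => s((↑(a + i) : ZMod m), ↑(a + i + 1)) := by
  induction L with
  | zero => rfl
  | succ L ih => simp [circulantArc, Walk.edges_concat, ih, List.range_succ, add_assoc]

theorem circulantArc_support (a L : ℕ) :
    (circulantArc h1 hm a L).support = (List.range (L + 1)).map fun i => (↑(a + i) : ZMod m) := by
  induction L with
  | zero => rfl
  | succ L ih => simp [circulantArc, Walk.support_concat, ih, List.range_succ (n := L + 1)]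

theorem circulantArc_isPath {a L : ℕ} (hL : L < m) : (circulantArc h1 hm a L).IsPath := by
  rw [Walk.isPath_def, circulantArc_support]
  refine List.nodup_range.map_on fun i hi j hj h => ZMod.natCast_injOn_Iio (m := m) ?_ ?_ ?_
  · simp only [List.mem_range] at hi; simp only [Set.mem_Iio]; omega
  · simp only [List.mem_range] at hj; simp only [Set.mem_Iio]; omega
  · push_cast at h
    exact add_left_cancel h

theorem zero_notMem_circulantArc_support {a L : ℕ} (ha : 0 < a) (haL : a + L < m) :
    (0 : ZMod m) ∉ (circulantArc h1 hm a L).support := by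
  simp only [circulantArc_support, List.mem_map, List.mem_range, not_exists, not_and]
  exact fun i hi => ZMod.natCast_ne_zero_of_pos_of_lt (by omega) (by omega)

theorem natCast_sym2_add_one_mem_circulantArc_edges_iff {a L x : ℕ} (hm2 : 2 < m) (hx : x < m)
    (haL : a + L ≤ m) :
    s((x : ZMod m), ↑(x + 1)) ∈ (circulantArc h1 hm a L).edges ↔ a ≤ x ∧ x < a + L := by
  simp only [circulantArc_edges, List.mem_map, List.mem_range]
  constructor
  · rintro ⟨i, hi, h⟩
    have := natCast_sym2_add_inj (by omega) hx one_pos hm2 h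
    omega
  · rintro ⟨hax, hxL⟩
    exact ⟨x - a, by omega, by rw [Nat.add_sub_cancel' hax]⟩

theorem natCast_sym2_add_notMem_circulantArc_edges {a L y d : ℕ} (hd : 1 < d)
    (hdm : d + 1 < m) : s((y : ZMod m), ↑(y + d)) ∉ (circulantArc h1 hm a L).edges := by
  simp only [circulantArc_edges, List.mem_map, not_exists, not_and]
  exact fun i _ => natCast_sym2_add_one_ne hd hdm

end Circulant

section Windmill

variable {k : ℕ}

theorem windmillGraph_degree_of_val_eq_zero {v : Fin (2 * k)} (hv : v.val = 0)
    [Fintype ((windmillGraph k).neighborSet v)] : (windmillGraph k).degree v = 2 * k - 1 := by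
  rw [← card_neighborFinset_eq_degree,
    show (windmillGraph k).neighborFinset v = univ.erase v by
      ext u
      rw [mem_neighborFinset]
      simp [windmillGraph, hv, eq_comm],
    card_erase_of_mem (mem_univ _), card_univ, Fintype.card_fin]

theorem windmillGraph_adj_of_lt {u v : Fin (2 * k)} (h : (windmillGraph k).Adj u v)
    (huv : u < v) : u.val = 0 ∨ (v.val = u.val + 1 ∧ u.val % 2 = 1) := by
  obtain ⟨-, h⟩ := h
  rw [Fin.lt_def] at huv
  omega

theorem windmillGraph_circulantG_exists_le_two_mul_congestion {m a b : ℕ} [NeZero m]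
    (hk : 0 < k) (R : RoutedEmbedding (windmillGraph k) (circulantG m {a, b})) :
    ∃ e ∈ (circulantG m {a, b}).edgeSet, k ≤ 2 * congestion _ _ R e := by
  classical
  by_contra! hlt
  let hub : Fin (2 * k) := ⟨0, by omega⟩
  have hdeg := R.degree_le_mul_of_congestion_le hub (k := (k - 1) / 2) fun w hw => by
    have := hlt s(_, w) hw
    omega
  rw [windmillGraph_degree_of_val_eq_zero rfl] at hdeg
  have := Nat.mul_le_mul_right ((k - 1) / 2)
    (circulantG_degree_le_four (a := a) (b := b) (R.toEquiv hub))
  omega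

end Windmill

section WindmillRouting

variable {c : ℕ}

def hubWalk (hc : 2 ≤ c) (j : ℕ) (hj : j < 2 * (2 * c)) :
    (circulantG (2 * (2 * c)) {1, c}).Walk 0 j :=
  let arc := circulantArc (S := {1, c}) (Set.mem_insert 1 {c}) (by omega)
  let chord := circulantG_adj_natCast_add (S := {1, c}) (Set.mem_insert_of_mem 1 rfl) (by omega)
    (by omega : c < 2 * (2 * c))
  if h₁ : j ≤ c then (arc 0 j).copy Nat.cast_zero (by rw [zero_add])
  else if j ≤ 2 * c then
    (Walk.cons (chord 0) (arc (0 + c) (j - c))).copy Nat.cast_zero (by congr 1; omega)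
  else if h₃ : j < 3 * c then
    ((arc j (3 * c - j)).concat (chord _)).reverse.copy
      (by rw [show j + (3 * c - j) + c = 2 * (2 * c) by omega, ZMod.natCast_self]) rfl
  else
    (arc j (2 * (2 * c) - j)).reverse.copy
      (by rw [Nat.add_sub_cancel' hj.le, ZMod.natCast_self]) rfl

theorem hubWalk_isPath (hc : 2 ≤ c) {j : ℕ} (hj : j < 2 * (2 * c)) :
    (hubWalk hc j hj).IsPath := by
  unfold hubWalk
  split_ifs
  · simp only [Walk.isPath_copy]
    exact circulantArc_isPath _ _ (by omega)
  · simp only [Walk.isPath_copy, Walk.cons_isPath_iff, Nat.cast_zero]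
    exact ⟨circulantArc_isPath _ _ (by omega),
      zero_notMem_circulantArc_support _ _ (by omega) (by omega)⟩
  · simp only [Walk.isPath_copy, Walk.isPath_reverse_iff, Walk.concat_isPath_iff]
    rw [show j + (3 * c - j) + c = 2 * (2 * c) by omega, ZMod.natCast_self]
    exact ⟨circulantArc_isPath _ _ (by omega),
      zero_notMem_circulantArc_support _ _ (by omega) (by omega)⟩
  · simp only [Walk.isPath_copy, Walk.isPath_reverse_iff]
    exact circulantArc_isPath _ _ (by omega)

def cycleHubTargets (c x : ℕ) : Finset ℕ :=
  if x < c then Ioc x c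
  else if x < 2 * c then Ioc x (2 * c)
  else if x < 3 * c then Ioc (2 * c) x
  else Icc (3 * c) x

def chordHubTargets (c y : ℕ) : Finset ℕ :=
  if y = 0 then Ioc c (2 * c)
  else if y = 3 * c then Ioo (2 * c) (3 * c)
  else ∅

theorem mem_cycleHubTargets_of_mem_hubWalk (hc : 2 ≤ c) {x j : ℕ} (hj : j < 2 * (2 * c))
    (hx : x < 2 * (2 * c))
    (h : s((x : ZMod (2 * (2 * c))), ↑(x + 1)) ∈ (hubWalk hc j hj).edges) :
    j ∈ cycleHubTargets c x := by
  have not_chord (y : ℕ) := natCast_sym2_add_one_ne (m := 2 * (2 * c)) (x := x) (y := y)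
    (d := c) (by omega) (by omega)
  unfold hubWalk at h
  split_ifs at h <;>
    simp only [Walk.edges_copy, Walk.edges_cons, Walk.edges_reverse, Walk.edges_concat,
      List.mem_cons, List.mem_reverse, List.concat_eq_append, List.mem_append,
      List.not_mem_nil, not_chord, false_or, or_false] at h <;>
    rw [natCast_sym2_add_one_mem_circulantArc_edges_iff _ _ (by omega) hx (by omega)] at h <;>
    unfold cycleHubTargets <;> split_ifs <;> simp only [mem_Ioc, mem_Icc] <;> omega

theorem mem_chordHubTargets_of_mem_hubWalk (hc : 2 ≤ c) {y j : ℕ} (hj : j < 2 * (2 * c))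
    (hy : y < 2 * (2 * c))
    (h : s((y : ZMod (2 * (2 * c))), ↑(y + c)) ∈ (hubWalk hc j hj).edges) :
    j ∈ chordHubTargets c y := by
  have not_arc (a L : ℕ) := natCast_sym2_add_notMem_circulantArc_edges (Set.mem_insert 1 {c})
    (m := 2 * (2 * c)) (by omega) (a := a) (L := L) (y := y) (d := c) (by omega) (by omega)
  unfold hubWalk at h
  split_ifs at h <;>
    simp only [Walk.edges_copy, Walk.edges_cons, Walk.edges_reverse, Walk.edges_concat,
      List.mem_cons, List.mem_reverse, List.concat_eq_append, List.mem_append,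
      List.not_mem_nil, not_arc, false_or, or_false] at h <;>
    have := natCast_sym2_add_inj hy (by omega) (by omega) (by omega) h <;>
    unfold chordHubTargets <;> split_ifs <;> simp only [mem_Ioc, mem_Ioo, notMem_empty] <;> omega

/-- The parity of `c` matters at `x = c`: the edge `{c, c + 1}` carries the `c` hub routes to
`(c, 2c]`, so it must not be a blade. -/
theorem card_cycleHubTargets_add_le (hc : Even c) {x : ℕ} (hx : x < 2 * (2 * c)) :
    (cycleHubTargets c x).card + (if x % 2 = 1 ∧ x + 1 < 2 * (2 * c) then 1 else 0) ≤ c := by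
  rw [Nat.even_iff] at hc
  unfold cycleHubTargets
  split_ifs <;> simp only [Nat.card_Ioc, Nat.card_Icc] <;> omega

theorem card_chordHubTargets_le (y : ℕ) : (chordHubTargets c y).card ≤ c := by
  unfold chordHubTargets
  split_ifs <;> simp only [Nat.card_Ioc, Nat.card_Ioo, card_empty] <;> omega

def windmillRoute (hc : 2 ≤ c) (u v : Fin (2 * (2 * c))) (huv : u < v)
    (h : (windmillGraph (2 * c)).Adj u v) :
    (circulantG (2 * (2 * c)) {1, c}).Walk (u.val : ZMod _) (v.val : ZMod _) :=
  if hu : u.val = 0 then (hubWalk hc v.val v.isLt).copy (by rw [hu, Nat.cast_zero]) rfl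
  else (circulantArc (Set.mem_insert 1 {c}) (by omega) u.val 1).copy rfl
    (by rw [((windmillGraph_adj_of_lt h huv).resolve_left hu).1])

theorem windmillRoute_isPath (hc : 2 ≤ c) (u v : Fin (2 * (2 * c))) (huv : u < v)
    (h : (windmillGraph (2 * c)).Adj u v) : (windmillRoute hc u v huv h).IsPath := by
  unfold windmillRoute
  split_ifs
  · rw [Walk.isPath_copy]
    exact hubWalk_isPath hc v.isLt
  · rw [Walk.isPath_copy]
    exact circulantArc_isPath _ _ (by omega)

theorem mem_windmillRoute_edges (hc : 2 ≤ c) {u v : Fin (2 * (2 * c))} {huv : u < v}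
    {h : (windmillGraph (2 * c)).Adj u v} {e : Sym2 (ZMod (2 * (2 * c)))}
    (he : e ∈ (windmillRoute hc u v huv h).edges) :
    (u.val = 0 ∧ e ∈ (hubWalk hc v.val v.isLt).edges) ∨
      (v.val = u.val + 1 ∧ u.val % 2 = 1 ∧ e = s((u.val : ZMod _), ↑(u.val + 1))) := by
  unfold windmillRoute at he
  split_ifs at he with hu
  · rw [Walk.edges_copy] at he
    exact .inl ⟨hu, he⟩
  · obtain ⟨hv, hodd⟩ := (windmillGraph_adj_of_lt h huv).resolve_left hu
    rw [Walk.edges_copy, circulantArc_edges] at he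
    exact .inr ⟨hv, hodd, by simpa using he⟩

def windmillRouting (hc : 2 ≤ c) :
    RoutedEmbedding (windmillGraph (2 * c)) (circulantG (2 * (2 * c)) {1, c}) :=
  haveI : NeZero (2 * (2 * c)) := ⟨by omega⟩
  .ofLT (finEquivZMod _) (windmillRoute hc) (windmillRoute_isPath hc)

open Fin.NatCast in
theorem congestion_windmillRouting_cycle_le (hc : 2 ≤ c) (heven : Even c) {x : ℕ}
    (hx : x < 2 * (2 * c)) :
    congestion _ _ (windmillRouting hc) s((x : ZMod (2 * (2 * c))), ↑(x + 1)) ≤ c := by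
  have : NeZero (2 * (2 * c)) := ⟨by omega⟩
  refine (RoutedEmbedding.congestion_ofLT_le
    ((cycleHubTargets c x).image (fun j : ℕ => s(0, (j : Fin (2 * (2 * c))))) ∪
      if x % 2 = 1 ∧ x + 1 < 2 * (2 * c) then {s((x : Fin _), ((x + 1 : ℕ) : Fin _))} else ∅)
    fun u v huv h he => ?_).trans ?_
  · rcases mem_windmillRoute_edges hc he with ⟨hu, he⟩ | ⟨hv, hodd, he⟩
    · refine mem_union_left _ (mem_image.2
        ⟨v.val, mem_cycleHubTargets_of_mem_hubWalk hc v.isLt hx he, ?_⟩)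
      simp [show u = 0 from Fin.ext (by simp [hu])]
    · obtain rfl : x = u.val := natCast_sym2_add_inj hx u.isLt one_pos (by omega) he
      refine mem_union_right _ ?_
      rw [if_pos ⟨hodd, hv ▸ v.isLt⟩, ← hv]
      simp
  · calc _ ≤ _ := card_union_le _ _
      _ ≤ (cycleHubTargets c x).card + (if x % 2 = 1 ∧ x + 1 < 2 * (2 * c) then 1 else 0) := by
        gcongr
        · exact card_image_le
        · split_ifs <;> simp
      _ ≤ c := card_cycleHubTargets_add_le heven hx

open Fin.NatCast in
theorem congestion_windmillRouting_chord_le (hc : 2 ≤ c) {y : ℕ} (hy : y < 2 * (2 * c)) :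
    congestion _ _ (windmillRouting hc) s((y : ZMod (2 * (2 * c))), ↑(y + c)) ≤ c := by
  have : NeZero (2 * (2 * c)) := ⟨by omega⟩
  refine (RoutedEmbedding.congestion_ofLT_le
    ((chordHubTargets c y).image (fun j : ℕ => s(0, (j : Fin (2 * (2 * c))))))
    fun u v huv h he => ?_).trans (card_image_le.trans (card_chordHubTargets_le y))
  rcases mem_windmillRoute_edges hc he with ⟨hu, he⟩ | ⟨-, -, he⟩
  · refine mem_image.2 ⟨v.val, mem_chordHubTargets_of_mem_hubWalk hc v.isLt hy he, ?_⟩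
    simp [show u = 0 from Fin.ext (by simp [hu])]
  · exact absurd he.symm (natCast_sym2_add_one_ne (by omega) (by omega))

theorem windmillGraph_circulantG_exists_congestion_le (hc : 2 ≤ c) (heven : Even c) :
    ∃ R : RoutedEmbedding (windmillGraph (2 * c)) (circulantG (2 * (2 * c)) {1, c}),
      ∀ e ∈ (circulantG (2 * (2 * c)) {1, c}).edgeSet, congestion _ _ R e ≤ c := by
  have : NeZero (2 * (2 * c)) := ⟨by omega⟩
  refine ⟨windmillRouting hc, fun e he => ?_⟩
  obtain ⟨x, hx, d, rfl | rfl, rfl⟩ := circulantG_exists_eq_of_mem_edgeSet he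
  · exact congestion_windmillRouting_cycle_le hc heven hx
  · exact congestion_windmillRouting_chord_le hc hx

end WindmillRouting

theorem congestion_windmill_circulant (n : ℕ) (hn : 4 ≤ n) :
    (∀ R : RoutedEmbedding (windmillGraph (2 ^ (n - 1)))
        (circulantG (2 ^ n) {1, 2 ^ (n - 2)}),
      ∃ e ∈ (circulantG (2 ^ n) {1, 2 ^ (n - 2)}).edgeSet,
        2 ^ (n - 2) ≤ congestion _ _ R e) ∧
    (∃ R : RoutedEmbedding (windmillGraph (2 ^ (n - 1)))
        (circulantG (2 ^ n) {1, 2 ^ (n - 2)}),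
      ∀ e ∈ (circulantG (2 ^ n) {1, 2 ^ (n - 2)}).edgeSet,
        congestion _ _ R e ≤ 2 ^ (n - 2)) := by
  have hk : 2 ^ (n - 1) = 2 * 2 ^ (n - 2) := by rw [← pow_succ']; congr 1; omega
  have hm : 2 ^ n = 2 * (2 * 2 ^ (n - 2)) := by rw [← hk, ← pow_succ']; congr 1; omega
  refine ⟨fun R => ?_, ?_⟩
  · obtain ⟨e, he, hle⟩ :=
      windmillGraph_circulantG_exists_le_two_mul_congestion (by positivity) R
    exact ⟨e, he, by omega⟩
  · rw [hk, hm]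
    exact windmillGraph_circulantG_exists_congestion_le
      (Nat.le_self_pow (by omega) 2) ((Nat.even_pow' (by omega)).2 even_two)
end
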